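/- arXiv:1904.03663 — 2 statements merged into one kernel-verified Lean document; each statement's English description precedes it below -/
import Mathlib

section
/- The semi-flow (G, I, π) is strongly mixing: for any two nonempty open subsets U, V of I, the set G \ {g ∈ G : gU ∩ V ≠ ∅} is finite (hence compact in the discrete topology); i.e., {g ∈ G : gU ∩ V ≠ ∅} contains the complement of a compact subset of G. -/
open Set Pointwise

/-- `B ⊆ G = ℕ∞` is syndetic: there is a finite `K` with `(t + K) ∩ B ≠ ∅` for all `t`. -/
def Syndetic (B : Set (WithTop ℕ)) : Prop :=
  ∃ K : Set (WithTop ℕ), K.Finite ∧ ∀ t : WithTop ℕ, (((t + ·) '' K) ∩ B).Nonempty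

/-- `B ⊆ G = ℕ∞` is thick: for every finite `K` there is `t` with `t + K ⊆ B`. -/
def Thick (B : Set (WithTop ℕ)) : Prop :=
  ∀ K : Set (WithTop ℕ), K.Finite → ∃ t : WithTop ℕ, ((t + ·) '' K) ⊆ B

/-- `B` is thickly syndetic: for every finite `K` there is a syndetic `S` with `S + K ⊆ B`. -/
def ThicklySyndetic (B : Set (WithTop ℕ)) : Prop :=
  ∀ K : Set (WithTop ℕ), K.Finite → ∃ S : Set (WithTop ℕ), Syndetic S ∧ S + K ⊆ B

/-- `B` is periodic: there are a syndetic additive submonoid `S` and `t` with `t + S ⊆ B`. -/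
def Periodic (B : Set (WithTop ℕ)) : Prop :=
  ∃ S : AddSubmonoid (WithTop ℕ), Syndetic (S : Set (WithTop ℕ)) ∧
    ∃ t : WithTop ℕ, ((t + ·) '' (S : Set (WithTop ℕ))) ⊆ B

/-- `B` is thickly periodic: for every finite `K` there is a periodic `P` with `P + K ⊆ B`. -/
def ThicklyPeriodic (B : Set (WithTop ℕ)) : Prop :=
  ∀ K : Set (WithTop ℕ), K.Finite → ∃ P : Set (WithTop ℕ), Periodic P ∧ P + K ⊆ B

/-- The tent map `f(x) = 1 - |1 - 2x|` on `I = [0,1]`. -/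
noncomputable def tentMap (x : unitInterval) : unitInterval :=
  ⟨1 - |1 - 2 * (x : ℝ)|, by
    obtain ⟨h0, h1⟩ := x.2
    constructor
    · have h : |1 - 2 * (x : ℝ)| ≤ 1 := abs_le.mpr ⟨by linarith, by linarith⟩
      linarith
    · have h : (0 : ℝ) ≤ |1 - 2 * (x : ℝ)| := abs_nonneg _
      linarith⟩

/-- The action `π : ℕ∞ × I → I`, with `π(n, x) = f^[n](x)` for `n ∈ ℕ` and `π(∞, x) = 0`. -/
noncomputable def piAct : WithTop ℕ → unitInterval → unitInterval := fun g x =>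
  WithTop.recTopCoe 0 (fun n => tentMap^[n] x) g

lemma tentMap_coe (x : unitInterval) : (tentMap x : ℝ) = 1 - |1 - 2 * (x : ℝ)| := rfl

lemma tent_surj : Function.Surjective tentMap := by
  intro y
  obtain ⟨h0, h1⟩ := y.2
  refine ⟨⟨(y : ℝ) / 2, by constructor <;> linarith⟩, ?_⟩
  apply Subtype.ext
  rw [tentMap_coe]
  simp only
  rw [abs_of_nonneg (by linarith)]
  ring

/-- `tentMap^[N]` maps each dyadic interval `[j/2^N, (j+1)/2^N]` onto `[0,1]`. -/
lemma key (N : ℕ) : ∀ j : ℕ, j < 2 ^ N → ∀ y : unitInterval, ∃ x : unitInterval,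
    (j : ℝ) / 2 ^ N ≤ (x : ℝ) ∧ (x : ℝ) ≤ (j + 1) / 2 ^ N ∧ tentMap^[N] x = y := by
  induction N with
  | zero =>
    intro j hj y
    interval_cases j
    exact ⟨y, by simpa using y.2.1, by simpa using y.2.2, rfl⟩
  | succ N ih =>
    intro j hj y
    have h2 : (0 : ℝ) < 2 ^ N := by positivity
    by_cases hjN : j < 2 ^ N
    · obtain ⟨x', hx1, hx2, hx3⟩ := ih j hjN y
      obtain ⟨h0, h1⟩ := x'.2
      refine ⟨⟨(x' : ℝ) / 2, by constructor <;> linarith⟩, ?_, ?_, ?_⟩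
      · show (j : ℝ) / 2 ^ (N + 1) ≤ (x' : ℝ) / 2
        have heq : (j : ℝ) / 2 ^ (N + 1) = ((j : ℝ) / 2 ^ N) / 2 := by
          rw [pow_succ]; ring
        linarith [heq]
      · show (x' : ℝ) / 2 ≤ ((j : ℝ) + 1) / 2 ^ (N + 1)
        have heq : ((j : ℝ) + 1) / 2 ^ (N + 1) = (((j : ℝ) + 1) / 2 ^ N) / 2 := by
          rw [pow_succ]; ring
        linarith [heq]
      · rw [Function.iterate_succ_apply]
        have : tentMap ⟨(x' : ℝ) / 2, by constructor <;> linarith⟩ = x' := by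
          apply Subtype.ext
          rw [tentMap_coe]
          simp only
          rw [abs_of_nonneg (by linarith)]
          ring
        rw [this, hx3]
    · have hjN' : 2 ^ N ≤ j := not_lt.mp hjN
      have hpow : 2 ^ (N + 1) = 2 ^ N * 2 := pow_succ 2 N
      set j' : ℕ := 2 ^ (N + 1) - 1 - j with hj'
      have hsum : j + j' + 1 = 2 ^ (N + 1) := by omega
      have hj'N : j' < 2 ^ N := by omega
      obtain ⟨x', hx1, hx2, hx3⟩ := ih j' hj'N y
      obtain ⟨h0, h1⟩ := x'.2
      have hsumR : (j : ℝ) + (j' : ℝ) + 1 = 2 ^ (N + 1) := by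
        exact_mod_cast congrArg (Nat.cast : ℕ → ℝ) hsum
      have hx2' : (x' : ℝ) * 2 ^ N ≤ (j' : ℝ) + 1 := (le_div_iff₀ h2).mp hx2
      have hx1' : (j' : ℝ) ≤ (x' : ℝ) * 2 ^ N := (div_le_iff₀ h2).mp hx1
      rw [pow_succ] at hsumR
      have expand : (1 - (x' : ℝ) / 2) * (2 ^ N * 2) = 2 ^ N * 2 - (x' : ℝ) * 2 ^ N := by
        ring
      refine ⟨⟨1 - (x' : ℝ) / 2, by constructor <;> linarith⟩, ?_, ?_, ?_⟩
      · show (j : ℝ) / 2 ^ (N + 1) ≤ 1 - (x' : ℝ) / 2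
        rw [div_le_iff₀ (by positivity : (0:ℝ) < 2 ^ (N + 1)), pow_succ]
        linarith [expand, hsumR, hx2']
      · show 1 - (x' : ℝ) / 2 ≤ ((j : ℝ) + 1) / 2 ^ (N + 1)
        rw [le_div_iff₀ (by positivity : (0:ℝ) < 2 ^ (N + 1)), pow_succ]
        linarith [expand, hsumR, hx1']
      · rw [Function.iterate_succ_apply]
        have : tentMap ⟨1 - (x' : ℝ) / 2, by constructor <;> linarith⟩ = x' := by
          apply Subtype.ext
          rw [tentMap_coe]
          simp only
          rw [abs_of_nonpos (by linarith)]
          ring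
        rw [this, hx3]

/-- The semi-flow `(ℕ∞, I, π)` is strongly mixing: for all nonempty open `U, V ⊆ I`,
the complement of `{g : g U ∩ V ≠ ∅}` is finite (hence compact in the discrete topology). -/
theorem stmt7 (U V : Set unitInterval) (hUo : IsOpen U) (hUne : U.Nonempty)
    (hVo : IsOpen V) (hVne : V.Nonempty) :
    ({g : WithTop ℕ | ((piAct g '' U) ∩ V).Nonempty}ᶜ).Finite := by
  obtain ⟨x₀, hx₀⟩ := hUne
  obtain ⟨ε, hε, hball⟩ := Metric.isOpen_iff.mp hUo x₀ hx₀
  obtain ⟨N, hN⟩ : ∃ n : ℕ, (1/2 : ℝ) ^ n < ε / 2 :=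
    exists_pow_lt_of_lt_one (by linarith) (by norm_num)
  have h2N : (0 : ℝ) < 2 ^ N := by positivity
  have hinv : (1 : ℝ) / 2 ^ N < ε / 2 := by
    rwa [div_pow, one_pow] at hN
  -- choose the dyadic interval
  set j : ℕ := min (⌊(x₀ : ℝ) * 2 ^ N⌋₊) (2 ^ N - 1) with hjdef
  have hjlt : j < 2 ^ N := by
    have : 1 ≤ 2 ^ N := Nat.one_le_two_pow
    omega
  have hx₀ge : (j : ℝ) / 2 ^ N ≤ (x₀ : ℝ) := by
    rw [div_le_iff₀ h2N]
    have h1n : j ≤ ⌊(x₀ : ℝ) * 2 ^ N⌋₊ := min_le_left _ _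
    have h1 : (j : ℝ) ≤ (⌊(x₀ : ℝ) * 2 ^ N⌋₊ : ℝ) := Nat.cast_le.mpr h1n
    have h2 : (⌊(x₀ : ℝ) * 2 ^ N⌋₊ : ℝ) ≤ (x₀ : ℝ) * 2 ^ N :=
      Nat.floor_le (mul_nonneg x₀.2.1 (by positivity))
    linarith
  have hx₀le : (x₀ : ℝ) ≤ ((j : ℝ) + 2) / 2 ^ N := by
    rcases le_or_gt (⌊(x₀ : ℝ) * 2 ^ N⌋₊) (2 ^ N - 1) with h | h
    · have hjf : j = ⌊(x₀ : ℝ) * 2 ^ N⌋₊ := min_eq_left h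
      have := Nat.lt_floor_add_one ((x₀ : ℝ) * 2 ^ N)
      rw [le_div_iff₀ h2N, hjf]
      push_cast
      linarith [Nat.lt_floor_add_one ((x₀ : ℝ) * 2 ^ N)]
    · have hjf : j = 2 ^ N - 1 := min_eq_right h.le
      have hjR : (j : ℝ) + 1 = 2 ^ N := by
        rw [hjf]
        have : 1 ≤ 2 ^ N := Nat.one_le_two_pow
        push_cast [Nat.cast_sub this]
        push_cast
        ring
      rw [le_div_iff₀ h2N]
      have := x₀.2.2
      nlinarith
  -- the dyadic interval is inside U
  have hsubU : ∀ x : unitInterval, (j : ℝ) / 2 ^ N ≤ (x : ℝ) →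
      (x : ℝ) ≤ ((j : ℝ) + 1) / 2 ^ N → x ∈ U := by
    intro x hx1 hx2
    apply hball
    rw [Metric.mem_ball, Subtype.dist_eq, Real.dist_eq, abs_lt]
    have h1 : ((j : ℝ) + 1) / 2 ^ N - (j : ℝ) / 2 ^ N = 1 / 2 ^ N := by ring
    have h2 : ((j : ℝ) + 2) / 2 ^ N - (j : ℝ) / 2 ^ N = 2 / 2 ^ N := by ring
    have h2div : (2 : ℝ) / 2 ^ N < ε := by
      have he : (2 : ℝ) / 2 ^ N = 2 * (1 / 2 ^ N) := by ring
      linarith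
    have h1div : (1 : ℝ) / 2 ^ N < ε := by linarith
    exact ⟨by linarith, by linarith⟩
  -- all n ≥ N are in the set
  have hmem : ∀ n : ℕ, N ≤ n → (n : WithTop ℕ) ∈ {g : WithTop ℕ | ((piAct g '' U) ∩ V).Nonempty} := by
    intro n hn
    obtain ⟨v, hv⟩ := hVne
    obtain ⟨w, hw⟩ := (tent_surj.iterate (n - N)) v
    obtain ⟨x, hx1, hx2, hx3⟩ := key N j hjlt w
    refine ⟨v, ⟨x, hsubU x hx1 hx2, ?_⟩, hv⟩
    show tentMap^[n] x = v
    have hn' : n = (n - N) + N := by omega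
    rw [hn', Function.iterate_add_apply, hx3, hw]
  -- conclude finiteness
  have hsub : {g : WithTop ℕ | ((piAct g '' U) ∩ V).Nonempty}ᶜ ⊆
      insert (⊤ : WithTop ℕ) ((fun n : ℕ => (n : WithTop ℕ)) '' Set.Iio N) := by
    intro g hg
    induction g using WithTop.recTopCoe with
    | top => exact Set.mem_insert _ _
    | coe n =>
      right
      refine ⟨n, ?_, rfl⟩
      by_contra h
      exact hg (hmem n (by simpa using not_lt.mp (by simpa [Set.mem_Iio] using h)))
  exact Set.Finite.subset (Set.Finite.insert _ ((Set.finite_Iio N).image _)) hsub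
end

section
/- The semi-flow (G, I, π) is strongly sensitive: there exists ε > 0 such that for every nonempty open subset U of I, the set G \ D(U, ε) is finite (hence compact in the discrete topology), where D(U, ε) = {g ∈ G : diam(gU) > ε}. -/
open Set Pointwise

open Filter Topology

/-! The `n`-th iterate of the tent map sends each dyadic point `k / 2 ^ n` to `k mod 2`, so by
the intermediate value theorem it maps every dyadic interval `[k / 2 ^ n, (k + 1) / 2 ^ n]` onto
`[0, 1]`. A nonempty open `U` contains such an interval for every large `n`, hence `nU = I` and
`diam (nU) = 1` for all but finitely many `n ∈ ℕ`; so `ε = 1 / 2` works, the only other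
possible exception being `∞`. -/

noncomputable def tent (x : ℝ) : ℝ := 1 - |1 - 2 * x|

lemma continuous_tent : Continuous tent := by
  unfold tent
  fun_prop

lemma tent_of_le_half {x : ℝ} (hx : x ≤ 1 / 2) : tent x = 2 * x := by
  rw [tent, abs_of_nonneg (by linarith)]
  ring

lemma tent_of_half_le {x : ℝ} (hx : 1 / 2 ≤ x) : tent x = 2 - 2 * x := by
  rw [tent, abs_of_nonpos (by linarith)]
  ring

lemma coe_tentMap_iterate (n : ℕ) (x : unitInterval) :
    ((tentMap^[n] x : unitInterval) : ℝ) = tent^[n] x := by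
  induction n generalizing x with
  | zero => rfl
  | succ n ih => exact ih (tentMap x)

lemma tent_iterate_dyadic (n k : ℕ) (hk : k ≤ 2 ^ n) :
    tent^[n] (k / 2 ^ n) = (k % 2 : ℕ) := by
  induction n generalizing k with
  | zero => interval_cases k <;> simp
  | succ n ih =>
    have hpow : (2 : ℝ) ^ (n + 1) = 2 * 2 ^ n := by ring
    rw [Function.iterate_succ_apply]
    rcases le_total k (2 ^ n) with hle | hge
    · have hhalf : (k : ℝ) / 2 ^ (n + 1) ≤ 1 / 2 := by
        rw [hpow, div_le_iff₀ (by positivity)]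
        linarith [show (k : ℝ) ≤ 2 ^ n by exact_mod_cast hle]
      have hdouble : 2 * ((k : ℝ) / 2 ^ (n + 1)) = k / 2 ^ n := by
        rw [hpow]
        field_simp
      rw [tent_of_le_half hhalf, hdouble, ih k hle]
    · have hhalf : 1 / 2 ≤ (k : ℝ) / 2 ^ (n + 1) := by
        rw [hpow, le_div_iff₀ (by positivity)]
        linarith [show (2 : ℝ) ^ n ≤ k by exact_mod_cast hge]
      have hsub : ((2 ^ (n + 1) - k : ℕ) : ℝ) = 2 * 2 ^ n - k := by
        push_cast [Nat.cast_sub hk]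
        ring
      have hreflect : tent (k / 2 ^ (n + 1)) = ((2 ^ (n + 1) - k : ℕ) : ℝ) / 2 ^ n := by
        rw [tent_of_half_le hhalf, hsub, hpow]
        field_simp
      have hparity : (2 ^ (n + 1) - k) % 2 = k % 2 := by
        rw [pow_succ] at hk ⊢
        omega
      rw [hreflect, ih _ (by rw [pow_succ] at hk ⊢; omega), hparity]

lemma Icc_subset_image_tent_iterate_dyadic (n k : ℕ) (hk : k + 1 ≤ 2 ^ n) :
    Icc 0 1 ⊆ tent^[n] '' Icc (k / 2 ^ n) ((k + 1) / 2 ^ n) := by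
  have hle : (k : ℝ) / 2 ^ n ≤ (k + 1) / 2 ^ n := by gcongr; linarith
  have hivt := intermediate_value_uIcc (a := (k : ℝ) / 2 ^ n) (b := (k + 1) / 2 ^ n)
    (continuous_tent.iterate n).continuousOn
  have hleft := tent_iterate_dyadic n k (by omega)
  have hright := tent_iterate_dyadic n (k + 1) hk
  push_cast at hright
  rw [uIcc_of_le hle, hleft, hright] at hivt
  refine (Eq.subset ?_).trans hivt
  rcases Nat.mod_two_eq_zero_or_one k with h | h
  · rw [h, show (k + 1) % 2 = 1 by omega]
    simp
  · rw [h, show (k + 1) % 2 = 0 by omega]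
    simp [uIcc_of_ge]

lemma exists_dyadic_Icc_subset_Ioo {a b : ℝ} {n : ℕ} (ha : 0 ≤ a) (hb : b ≤ 1)
    (hn : 2 / 2 ^ n < b - a) :
    ∃ k : ℕ, k + 1 ≤ 2 ^ n ∧ Icc (k / 2 ^ n : ℝ) ((k + 1) / 2 ^ n) ⊆ Ioo a b := by
  have hpos : (0 : ℝ) < 2 ^ n := by positivity
  obtain ⟨k, hk⟩ : ∃ k : ℕ, (k : ℝ) = ⌊a * 2 ^ n⌋₊ + 1 := ⟨⌊a * 2 ^ n⌋₊ + 1, by push_cast; rfl⟩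
  have hak : a < k / 2 ^ n := by
    rw [lt_div_iff₀ hpos, hk]
    exact Nat.lt_floor_add_one (a * 2 ^ n)
  have hkb : (k + 1) / 2 ^ n < b := by
    rw [div_lt_iff₀ hpos]
    rw [div_lt_iff₀ hpos] at hn
    have := Nat.floor_le (mul_nonneg ha hpos.le)
    linarith
  refine ⟨k, ?_, Icc_subset_Ioo hak hkb⟩
  have : ((k + 1 : ℕ) : ℝ) ≤ 2 ^ n := by
    push_cast
    rw [div_lt_iff₀ hpos] at hkb
    nlinarith
  exact_mod_cast this

lemma eventually_Icc_subset_image_tent_iterate {a b : ℝ} (ha : 0 ≤ a) (hab : a < b)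
    (hb : b ≤ 1) : ∀ᶠ n in atTop, Icc 0 1 ⊆ tent^[n] '' Ioo a b := by
  have hlim : Tendsto (fun n : ℕ => (2 : ℝ) / 2 ^ n) atTop (𝓝 0) :=
    tendsto_const_nhds.div_atTop (tendsto_pow_atTop_atTop_of_one_lt one_lt_two)
  filter_upwards [hlim.eventually (gt_mem_nhds (sub_pos.mpr hab))] with n hn
  obtain ⟨k, hk, hsub⟩ := exists_dyadic_Icc_subset_Ioo ha hb hn
  exact (Icc_subset_image_tent_iterate_dyadic n k hk).trans (image_mono hsub)

lemma eventually_Icc_subset_image_tent_iterate_of_isOpen {U : Set unitInterval} (hU : IsOpen U)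
    (hne : U.Nonempty) : ∀ᶠ n in atTop, Icc 0 1 ⊆ tent^[n] '' (Subtype.val '' U) := by
  obtain ⟨a, b, hab, hsub⟩ := hU.exists_Ioo_subset hne
  filter_upwards [eventually_Icc_subset_image_tent_iterate a.2.1 hab b.2.2] with n hn
  rw [← image_subtype_val_Ioo] at hn
  exact hn.trans (image_mono (image_mono hsub))

lemma one_le_diam_image_piAct {U : Set unitInterval} {n : ℕ}
    (h : Icc 0 1 ⊆ tent^[n] '' (Subtype.val '' U)) : 1 ≤ Metric.diam (piAct n '' U) := by
  have himage : Subtype.val '' (piAct n '' U) = tent^[n] '' (Subtype.val '' U) := by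
    rw [image_image, image_image]
    exact image_congr fun x _ => coe_tentMap_iterate n x
  calc (1 : ℝ) = Metric.diam (Icc (0 : ℝ) 1) := by simp [Real.diam_Icc]
    _ ≤ Metric.diam (Subtype.val '' (piAct n '' U)) :=
      Metric.diam_mono (himage ▸ h) ((Metric.isBounded_Icc 0 1).subset (Subtype.coe_image_subset _ _))
    _ = Metric.diam (piAct n '' U) := isometry_subtype_coe.diam_image _

/-- The semi-flow `(ℕ∞, I, π)` is strongly sensitive: there is `ε > 0` such that for
every nonempty open `U ⊆ I`, the complement of `D(U, ε) = {g : diam (g U) > ε}` is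
finite (hence compact in the discrete topology). -/
theorem stmt8 :
    ∃ ε : ℝ, 0 < ε ∧ ∀ U : Set unitInterval, IsOpen U → U.Nonempty →
      ({g : WithTop ℕ | ε < Metric.diam (piAct g '' U)}ᶜ).Finite := by
  refine ⟨1 / 2, by norm_num, fun U hU hne => ?_⟩
  have hlarge : ∀ᶠ n : ℕ in cofinite, (1 / 2 : ℝ) < Metric.diam (piAct n '' U) := by
    rw [Nat.cofinite_eq_atTop]
    filter_upwards [eventually_Icc_subset_image_tent_iterate_of_isOpen hU hne] with n hn
    exact one_half_lt_one.trans_le (one_le_diam_image_piAct hn)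
  exact Set.finite_option.mpr (eventually_cofinite.mp hlarge)
end
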